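/- arXiv:2004.05998 — 12 statements merged into one kernel-verified Lean document; each statement's English description precedes it below -/
import Mathlib

section
/- Let (A,{·,·,·}) be a 3-pre-Lie algebra over a field K of characteristic 0. Then the induced 3-commutator [x,y,z]^C = {x,y,z} + {y,z,x} + {z,x,y} defines a 3-Lie algebra structure on A, i.e., [·,·,·]^C is skew-symmetric (alternating) and satisfies the fundamental identity [x1,x2,[x3,x4,x5]^C]^C = [[x1,x2,x3]^C,x4,x5]^C + [x3,[x1,x2,x4]^C,x5]^C + [x3,x4,[x1,x2,x5]^C]^C for all x1,...,x5 in A. -/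
universe u v w

variable (K : Type u) [Field K] [CharZero K]

section MultilinearDefs

variable {M₁ M₂ M₃ M₄ : Type*}
  [AddCommGroup M₁] [Module K M₁] [AddCommGroup M₂] [Module K M₂]
  [AddCommGroup M₃] [Module K M₃] [AddCommGroup M₄] [Module K M₄]

/-- A map `f : M₁ → M₂ → M₃ → M₄` which is `K`-linear in each of its three arguments. -/
def IsTrilinearMap (f : M₁ → M₂ → M₃ → M₄) : Prop :=
  (∀ (c : K) (x x' : M₁) (y : M₂) (z : M₃), f (c • x + x') y z = c • f x y z + f x' y z) ∧
  (∀ (c : K) (x : M₁) (y y' : M₂) (z : M₃), f x (c • y + y') z = c • f x y z + f x y' z) ∧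
  (∀ (c : K) (x : M₁) (y : M₂) (z z' : M₃), f x y (c • z + z') = c • f x y z + f x y z')

end MultilinearDefs

section Algebras

variable {A : Type*} [AddCommGroup A] [Module K A]
variable {V : Type*} [AddCommGroup V] [Module K V]

/-- The induced 3-commutator `[x,y,z]^C = {x,y,z} + {y,z,x} + {z,x,y}` of a ternary
operation. -/
def preC (p : A → A → A → A) : A → A → A → A :=
  fun x y z => p x y z + p y z x + p z x y

/-- A (trilinear) bracket makes `A` a 3-Lie algebra: it is skew-symmetric (alternating)
and satisfies the fundamental identity. -/
def Is3Lie (br : A → A → A → A) : Prop :=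
  IsTrilinearMap K br ∧
  (∀ x y z : A, br x y z = - br y x z) ∧
  (∀ x y z : A, br x y z = - br x z y) ∧
  (∀ x1 x2 x3 x4 x5 : A,
    br x1 x2 (br x3 x4 x5)
      = br (br x1 x2 x3) x4 x5 + br x3 (br x1 x2 x4) x5 + br x3 x4 (br x1 x2 x5))

/-- A (trilinear) operation makes `A` a 3-pre-Lie algebra: (P0), (P1), (P2). -/
def Is3PreLie (p : A → A → A → A) : Prop :=
  IsTrilinearMap K p ∧
  (∀ x y z : A, p x y z = - p y x z) ∧
  (∀ x1 x2 x3 x4 x5 : A,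
    p x1 x2 (p x3 x4 x5)
      = p (preC p x1 x2 x3) x4 x5 + p x3 (preC p x1 x2 x4) x5 + p x3 x4 (p x1 x2 x5)) ∧
  (∀ x1 x2 x3 x4 x5 : A,
    p (preC p x1 x2 x3) x4 x5
      = p x1 x2 (p x3 x4 x5) + p x2 x3 (p x1 x4 x5) + p x3 x1 (p x2 x4 x5))

/-- `ρ` is a representation of the 3-Lie algebra `(A, br)` on `V`. -/
def Is3LieRep (br : A → A → A → A) (ρ : A → A → V → V) : Prop :=
  IsTrilinearMap K ρ ∧
  (∀ (x y : A) (v : V), ρ x y v = - ρ y x v) ∧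
  (∀ (x1 x2 x3 x4 : A) (v : V),
    ρ x1 x2 (ρ x3 x4 v) - ρ x3 x4 (ρ x1 x2 v)
      = ρ (br x1 x2 x3) x4 v - ρ (br x1 x2 x4) x3 v) ∧
  (∀ (x1 x2 x3 x4 : A) (v : V),
    ρ (br x1 x2 x3) x4 v
      = ρ x1 x2 (ρ x3 x4 v) + ρ x2 x3 (ρ x1 x4 v) + ρ x3 x1 (ρ x2 x4 v))

/-- `(l, r)` is a representation of the 3-pre-Lie algebra `(A, p)` on `V`:
`l` is skew-symmetric and a representation of the sub-adjacent 3-Lie algebra,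
together with conditions (rep1)-(rep4), where `μ(x,y) = l(x,y) + r(x,y) - r(y,x)`. -/
def Is3PreLieRep (p : A → A → A → A) (l r : A → A → V → V) : Prop :=
  IsTrilinearMap K l ∧ IsTrilinearMap K r ∧
  Is3LieRep K (preC p) l ∧
  (∀ (x1 x2 x3 x4 : A) (v : V),
    l x1 x2 (r x3 x4 v)
      = r x3 x4 (l x1 x2 v + r x1 x2 v - r x2 x1 v)
        + r (preC p x1 x2 x3) x4 v + r x3 (p x1 x2 x4) v) ∧
  (∀ (x1 x2 x3 x4 : A) (v : V),
    r (preC p x1 x2 x3) x4 v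
      = l x1 x2 (r x3 x4 v) + l x2 x3 (r x1 x4 v) + l x3 x1 (r x2 x4 v)) ∧
  (∀ (x1 x2 x3 x4 : A) (v : V),
    r x1 (p x2 x3 x4) v
      = r x3 x4 (l x1 x2 v + r x1 x2 v - r x2 x1 v)
        - r x2 x4 (l x1 x3 v + r x1 x3 v - r x3 x1 v) + l x2 x3 (r x1 x4 v)) ∧
  (∀ (x1 x2 x3 x4 : A) (v : V),
    r x3 x4 (l x1 x2 v + r x1 x2 v - r x2 x1 v)
      = l x1 x2 (r x3 x4 v) - r x2 (p x1 x3 x4) v + r x1 (p x2 x3 x4) v)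

/-- `T : V → A` is an `𝒪`-operator on the 3-Lie algebra `(A, br)` associated to the
representation `ρ` of `A` on `V`. -/
def IsOOperator3Lie (br : A → A → A → A) (ρ : A → A → V → V) (T : V →ₗ[K] A) : Prop :=
  ∀ u v w : V,
    br (T u) (T v) (T w) = T (ρ (T u) (T v) w + ρ (T v) (T w) u + ρ (T w) (T u) v)

/-- `T : V → A` is an `𝒪`-operator on the 3-pre-Lie algebra `(A, p)` associated to the
representation `(l, r)` of `A` on `V`. -/
def IsOOperator3PreLie (p : A → A → A → A) (l r : A → A → V → V) (T : V →ₗ[K] A) : Prop :=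
  ∀ u v w : V,
    p (T u) (T v) (T w) = T (l (T u) (T v) w - r (T u) (T w) v + r (T v) (T w) u)

/-- `R : A → A` is a Rota-Baxter operator of weight 0 on the ternary algebra `(A, br)`. -/
def IsRotaBaxter3 (br : A → A → A → A) (R : A →ₗ[K] A) : Prop :=
  ∀ x y z : A,
    br (R x) (R y) (R z) = R (br (R x) (R y) z + br (R x) y (R z) + br x (R y) (R z))

/-- The horizontal operation `{x,y,z}^h = ↖(x,y,z) + ↗(x,y,z) - ↗(y,x,z)`. -/
def hOp (nw ne : A → A → A → A) : A → A → A → A :=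
  fun x y z => nw x y z + ne x y z - ne y x z

/-- The vertical operation `{x,y,z}^v = ↖(x,y,z) + ↗(z,x,y) - ↗(z,y,x)`. -/
def vOp (nw ne : A → A → A → A) : A → A → A → A :=
  fun x y z => nw x y z + ne z x y - ne z y x

/-- The bracket `[x,y,z]^C = {x,y,z}^h + {y,z,x}^h + {z,x,y}^h`. -/
def cOp (nw ne : A → A → A → A) : A → A → A → A :=
  fun x y z => hOp nw ne x y z + hOp nw ne y z x + hOp nw ne z x y

/-- `(A, nw, ne)` (with `nw = ↖`, `ne = ↗`) is a 3-L-dendriform algebra: axioms (L0)-(L6). -/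
def Is3LDendriform (nw ne : A → A → A → A) : Prop :=
  IsTrilinearMap K nw ∧ IsTrilinearMap K ne ∧
  (∀ x1 x2 x3 : A, nw x1 x2 x3 + nw x2 x1 x3 = 0) ∧
  (∀ x1 x2 x3 x4 x5 : A,
    nw x1 x2 (nw x3 x4 x5) - nw x3 x4 (nw x1 x2 x5)
      = nw (cOp nw ne x1 x2 x3) x4 x5 - nw (cOp nw ne x1 x2 x4) x3 x5) ∧
  (∀ x1 x2 x3 x4 x5 : A,
    nw x1 x2 (ne x5 x3 x4) - ne x5 x3 (hOp nw ne x1 x2 x4)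
      = ne x5 (cOp nw ne x1 x2 x3) x4 + ne (vOp nw ne x1 x2 x5) x3 x4) ∧
  (∀ x1 x2 x3 x4 x5 : A,
    ne x5 x1 (hOp nw ne x2 x3 x4) - nw x2 x3 (ne x5 x1 x4)
      = ne (vOp nw ne x1 x2 x5) x3 x4 - ne (vOp nw ne x1 x3 x5) x2 x4) ∧
  (∀ x1 x2 x3 x4 x5 : A,
    nw (cOp nw ne x1 x2 x3) x4 x5
      = nw x1 x2 (nw x3 x4 x5) + nw x2 x3 (nw x1 x4 x5) + nw x3 x1 (nw x2 x4 x5)) ∧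
  (∀ x1 x2 x3 x4 x5 : A,
    ne x5 (cOp nw ne x1 x2 x3) x4
      = nw x1 x2 (ne x5 x3 x4) + nw x2 x3 (ne x5 x1 x4) + nw x3 x1 (ne x5 x2 x4)) ∧
  (∀ x1 x2 x3 x4 x5 : A,
    nw x1 x2 (ne x5 x3 x4) + ne x5 x1 (hOp nw ne x2 x3 x4)
      = ne x5 x2 (hOp nw ne x1 x3 x4) + ne (vOp nw ne x1 x2 x5) x3 x4)

end Algebras

/-- The induced 3-commutator of a 3-pre-Lie algebra defines a 3-Lie
algebra structure. -/
theorem stmt0 {A : Type v} [AddCommGroup A] [Module K A]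
    (p : A → A → A → A) (hp : Is3PreLie K p) :
    Is3Lie K (preC p) := by
  obtain ⟨⟨ht1, ht2, ht3⟩, hp0, hp1, hp2⟩ := hp
  have hadd1 : ∀ x x' y z : A, p (x + x') y z = p x y z + p x' y z := by
    intro x x' y z
    have h := ht1 1 x x' y z
    simpa using h
  have hadd2 : ∀ (x : A) (y y' : A) (z : A), p x (y + y') z = p x y z + p x y' z := by
    intro x y y' z
    have h := ht2 1 x y y' z
    simpa using h
  have hadd3 : ∀ (x y z z' : A), p x y (z + z') = p x y z + p x y z' := by
    intro x y z z'
    have h := ht3 1 x y z z'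
    simpa using h
  have hzero3 : ∀ x y : A, p x y 0 = 0 := by
    intro x y
    have h := hadd3 x y 0 0
    simpa using h
  have hneg3 : ∀ x y z : A, p x y (-z) = - p x y z := by
    intro x y z
    have h := hadd3 x y z (-z)
    rw [add_neg_cancel, hzero3] at h
    exact eq_neg_of_add_eq_zero_right h.symm
  have hR : ∀ X Y a b c : A, p X Y (p a b c) = - p X Y (p b a c) := by
    intro X Y a b c
    rw [hp0 a b c, hneg3]
  have hP1 : ∀ a b c d e : A, p a b (p c d e)
      = p (p a b c) d e + p (p b c a) d e + p (p c a b) d e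
        + p c (p a b d) e + p c (p b d a) e + p c (p d a b) e
        + p c d (p a b e) := by
    intro a b c d e
    have h := hp1 a b c d e
    simp only [preC, hadd1, hadd2] at h
    linear_combination (norm := abel1) h
  have hP2 : ∀ a b c d e : A,
      p (p a b c) d e + p (p b c a) d e + p (p c a b) d e
      = p a b (p c d e) + p b c (p a d e) + p c a (p b d e) := by
    intro a b c d e
    have h := hp2 a b c d e
    simp only [preC, hadd1, hadd2] at h
    linear_combination (norm := abel1) h
  refine ⟨⟨?_, ?_, ?_⟩, ?_, ?_, ?_⟩
  · intro c x x' y z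
    simp only [preC, ht1, ht2, ht3, smul_add]
    abel
  · intro c x y y' z
    simp only [preC, ht1, ht2, ht3, smul_add]
    abel
  · intro c x y z z'
    simp only [preC, ht1, ht2, ht3, smul_add]
    abel
  · intro x y z
    simp only [preC]
    linear_combination (norm := abel1) (hp0 x y z) + (hp0 x z y) + (hp0 y z x)
  · intro x y z
    simp only [preC]
    linear_combination (norm := abel1) (hp0 x y z) + (hp0 x z y) + (hp0 y z x)
  · intro x1 x2 x3 x4 x5
    simp only [preC, hadd1, hadd2, hadd3]
    linear_combination (norm := abel1) (hP1 x1 x2 x3 x4 x5) - (hP1 x1 x2 x3 x5 x4) + (hP1 x1 x2 x4 x5 x3) - (hP1 x1 x3 x4 x5 x2) + (hP2 x1 x3 x5 x4 x2) + (hP1 x2 x3 x4 x5 x1) - (hP2 x2 x3 x5 x4 x1) + (hP1 x3 x4 x1 x5 x2) - (hP1 x3 x4 x2 x5 x1) - (hR x4 x5 x3 x1 x2) + (hR x3 x5 x1 x4 x2) + (hp0 x2 x1 (p x3 x5 x4)) - (hR x2 x1 x3 x5 x4) - (hp0 x5 x3 (p x1 x2 x4)) + (hp0 (p x5 x2 x3)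 x4 x1) - (hp0 x5 (p x3 x1 x2) x4) - (hp0 x4 x3 (p x1 x5 x2)) + (hR x4 x3 x1 x5 x2) + (hp0 x1 (p x5 x3 x4) x2) + (hp0 x1 x2 (p x5 x3 x4)) + (hp0 x2 x5 (p x4 x3 x1)) - (hR x2 x5 x4 x3 x1) + (hp0 x1 x5 (p x3 x4 x2)) - (hp0 (p x3 x5 x1) x4 x2) - (hR x2 x3 x5 x4 x1) - (hp0 x5 (p x2 x3 x1) x4) - (hp0 (p x5 x1 x2) x3 x4) - (hp0 (p x1 x2 x3) x5 x4) - (hp0 x3 (p x1 x2 x5) x4) - (hp0 x3 x5 (p x2 x4 x1)) + (hp0 x1 (p x4 x5 x3) x2) + (hp0 x4 (p x2 x3 x5) x1) + (hp0 (p x3 x5 x2) x4 x1) - (hp0 (p x2 x5 x1) x3 x4) - (hR x5 x2 x4 x3 x1) - (hp0 (p x1 x3 x5) x4 x2) + (hR x1 x3 x5 x4 x2) - (hp0 x3 x4 (p x5 x1 x2)) - (hp0 x5 x3 (p x4 x1 x2)) + (hp0 (p x3 x4 x5) x1 x2) - (hp0 x4 (p x5 x1 x3) x2)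
end

section
/- Let (A,{·,·,·}) be a 3-pre-Lie algebra over a field K of characteristic 0, and define the left multiplication L : A×A → End(A) by L(x,y)z = {x,y,z}. Then (A,L) is a representation of the sub-adjacent 3-Lie algebra (A,[·,·,·]^C), where [x,y,z]^C = {x,y,z} + {y,z,x} + {z,x,y}. -/
universe u v w

variable (K : Type u) [Field K] [CharZero K]

/-- The left multiplication `L(x,y)z = {x,y,z}` of a 3-pre-Lie algebra is a
representation of the sub-adjacent 3-Lie algebra `(A, [·,·,·]^C)` on `A`. -/
theorem stmt1 {A : Type v} [AddCommGroup A] [Module K A]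
    (p : A → A → A → A) (hp : Is3PreLie K p) :
    Is3LieRep K (preC p) p := by
  obtain ⟨htri, hskew, hP1, hP2⟩ := hp
  refine ⟨htri, hskew, ?_, hP2⟩
  intro x1 x2 x3 x4 v
  have h := hP1 x1 x2 x3 x4 v
  have h2 := hskew x3 (preC p x1 x2 x4) v
  rw [h, h2]
  abel
end

section
/- Let A be a K-vector space with a trilinear map {·,·,·} : A×A×A → A satisfying {x,y,z} = −{y,x,z} for all x,y,z in A. Suppose that the bracket [x,y,z]^C = {x,y,z} + {y,z,x} + {z,x,y} defines a 3-Lie algebra structure on A and that the left multiplication L given by L(x,y)z = {x,y,z} is a representation of this 3-Lie algebra on A. Then (A,{·,·,·}) is a 3-pre-Lie algebra. -/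
universe u v w

variable (K : Type u) [Field K] [CharZero K]

/-- If `{·,·,·}` is trilinear and skew in its first two arguments, the induced
3-commutator is a 3-Lie bracket, and the left multiplication is a representation of that
3-Lie algebra, then `{·,·,·}` is a 3-pre-Lie structure. -/
theorem stmt2 {A : Type v} [AddCommGroup A] [Module K A]
    (p : A → A → A → A)
    (htri : IsTrilinearMap K p)
    (hskew : ∀ x y z : A, p x y z = - p y x z)
    (hlie : Is3Lie K (preC p))
    (hrep : Is3LieRep K (preC p) p) :
    Is3PreLie K p := by
  obtain ⟨-, -, h1, h2⟩ := hrep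
  refine ⟨htri, hskew, ?_, ?_⟩
  · intro x1 x2 x3 x4 x5
    have e := h1 x1 x2 x3 x4 x5
    have e2 : p x3 (preC p x1 x2 x4) x5 = - p (preC p x1 x2 x4) x3 x5 := hskew _ _ _
    have e' : p x1 x2 (p x3 x4 x5)
        = p (preC p x1 x2 x3) x4 x5 - p (preC p x1 x2 x4) x3 x5 + p x3 x4 (p x1 x2 x5) := by
      rw [← e]; abel
    rw [e2, e']; abel
  · intro x1 x2 x3 x4 x5
    exact h2 x1 x2 x3 x4 x5
end

section
/- Let (A,[·,·,·]) be a 3-Lie algebra over a field K of characteristic 0, let (V,ρ) be a representation of A, and let T : V → A be an O-operator associated to (V,ρ). Then the operation {u,v,w} := ρ(Tu,Tv)w defines a 3-pre-Lie algebra structure on V. -/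
universe u v w

variable (K : Type u) [Field K] [CharZero K]

/-- An `𝒪`-operator `T` on a 3-Lie algebra associated to a representation
`(V, ρ)` induces a 3-pre-Lie algebra structure `{u,v,w} = ρ(Tu,Tv)w` on `V`. -/
theorem stmt3 {A : Type v} [AddCommGroup A] [Module K A]
    {V : Type w} [AddCommGroup V] [Module K V]
    (br : A → A → A → A) (hbr : Is3Lie K br)
    (ρ : A → A → V → V) (hρ : Is3LieRep K br ρ)
    (T : V →ₗ[K] A) (hT : IsOOperator3Lie K br ρ T) :
    Is3PreLie K (fun u v w => ρ (T u) (T v) w) := by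
  obtain ⟨⟨hρ1, hρ2, hρ3⟩, hskew, hr3, hr4⟩ := hρ
  have key : ∀ x1 x2 x3 : V,
      T (preC (fun u v w => ρ (T u) (T v) w) x1 x2 x3) = br (T x1) (T x2) (T x3) := by
    intro x1 x2 x3
    simp only [preC]
    exact (hT x1 x2 x3).symm
  refine ⟨⟨?_, ?_, ?_⟩, ?_, ?_, ?_⟩
  · intro c x x' y z
    simp only [map_add, map_smul]
    exact hρ1 c _ _ _ _
  · intro c x y y' z
    simp only [map_add, map_smul]
    exact hρ2 c _ _ _ _
  · intro c x y z z'
    exact hρ3 c _ _ _ _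
  · intro x y z
    exact hskew _ _ _
  · intro x1 x2 x3 x4 x5
    simp only [key]
    have h3 := hr3 (T x1) (T x2) (T x3) (T x4) x5
    rw [sub_eq_iff_eq_add] at h3
    rw [h3, hskew (T x3) (br (T x1) (T x2) (T x4)) x5]
    abel
  · intro x1 x2 x3 x4 x5
    simp only [key]
    exact hr4 (T x1) (T x2) (T x3) (T x4) x5
end

section
/- Let (A,[·,·,·]) be a 3-Lie algebra over a field K of characteristic 0. Then there exists a compatible 3-pre-Lie algebra structure on A (i.e., a 3-pre-Lie operation {·,·,·} on A with [x,y,z] = {x,y,z} + {y,z,x} + {z,x,y} for all x,y,z) if and only if there exists a representation (V,ρ) of A and an invertible (bijective linear) O-operator T : V → A associated to (V,ρ). -/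
universe u v w

variable (K : Type u) [Field K] [CharZero K]

/-- A 3-Lie algebra admits a compatible 3-pre-Lie structure iff there is a
representation `(V, ρ)` and an invertible `𝒪`-operator `T : V → A`. -/
theorem stmt5 {A : Type v} [AddCommGroup A] [Module K A]
    (br : A → A → A → A) (hbr : Is3Lie K br) :
    (∃ p : A → A → A → A, Is3PreLie K p ∧ ∀ x y z : A, br x y z = preC p x y z) ↔
    (∃ (V : Type v) (_ : AddCommGroup V) (_ : Module K V)
        (ρ : A → A → V → V) (T : V →ₗ[K] A),
        Is3LieRep K br ρ ∧ Function.Bijective T ∧ IsOOperator3Lie K br ρ T) := by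
  obtain ⟨htri, hsk1, hsk2, hFI⟩ := hbr
  constructor
  · rintro ⟨p, ⟨ptri, p0, p1, p2⟩, hc⟩
    refine ⟨A, inferInstance, inferInstance, fun x y v => p x y v, LinearMap.id, ?_,
      Function.bijective_id, ?_⟩
    · refine ⟨ptri, fun x y v => p0 x y v, ?_, ?_⟩
      · intro x1 x2 x3 x4 v
        show p x1 x2 (p x3 x4 v) - p x3 x4 (p x1 x2 v)
          = p (br x1 x2 x3) x4 v - p (br x1 x2 x4) x3 v
        rw [hc x1 x2 x3, hc x1 x2 x4, p1 x1 x2 x3 x4 v, p0 x3 (preC p x1 x2 x4) v]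
        abel
      · intro x1 x2 x3 x4 v
        show p (br x1 x2 x3) x4 v
          = p x1 x2 (p x3 x4 v) + p x2 x3 (p x1 x4 v) + p x3 x1 (p x2 x4 v)
        rw [hc]; exact p2 x1 x2 x3 x4 v
    · intro u v w
      simp only [LinearMap.id_coe, id_eq]
      rw [hc]; rfl
  · rintro ⟨V, _, _, ρ, T, ⟨ρtri, ρsk, ρ1, ρ2⟩, hTbij, hO⟩
    let e := LinearEquiv.ofBijective T hTbij
    have hTs : ∀ x : A, T (e.symm x) = x := fun x => e.apply_symm_apply x
    have hST : ∀ v : V, e.symm (T v) = v := fun v => e.symm_apply_apply v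
    set p : A → A → A → A := fun x y z => T (ρ x y (e.symm z)) with hp
    have hcomp : ∀ x y z, br x y z = preC p x y z := by
      intro x y z
      have h := hO (e.symm x) (e.symm y) (e.symm z)
      rw [hTs, hTs, hTs] at h
      rw [h, map_add, map_add]
      rfl
    refine ⟨p, ⟨⟨?_, ?_, ?_⟩, ?_, ?_, ?_⟩, hcomp⟩
    · intro c x x' y z
      simp only [hp]
      rw [ρtri.1 c x x' y (e.symm z), map_add, map_smul]
    · intro c x y y' z
      simp only [hp]
      rw [ρtri.2.1 c x y y' (e.symm z), map_add, map_smul]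
    · intro c x y z z'
      simp only [hp, map_add, map_smul, ρtri.2.2 c x y (e.symm z) (e.symm z')]
    · intro x y z
      simp only [hp]
      rw [ρsk x y (e.symm z), map_neg]
    · intro x1 x2 x3 x4 x5
      rw [← hcomp, ← hcomp]
      simp only [hp, hST]
      rw [← map_add, ← map_add]
      congr 1
      set v := e.symm x5
      have h1 := ρ1 x1 x2 x3 x4 v
      have h2 := ρsk x3 (br x1 x2 x4) v
      rw [h2]
      have h1' : ρ x1 x2 (ρ x3 x4 v)
          = (ρ x1 x2 (ρ x3 x4 v) - ρ x3 x4 (ρ x1 x2 v)) + ρ x3 x4 (ρ x1 x2 v) := by abel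
      rw [h1', h1]
      abel
    · intro x1 x2 x3 x4 x5
      rw [← hcomp]
      simp only [hp, hST]
      rw [← map_add, ← map_add]
      congr 1
      exact ρ2 x1 x2 x3 x4 (e.symm x5)
end

section
/- Let (A,{·,·,·}) be a 3-pre-Lie algebra over a field K of characteristic 0, V a K-vector space, and l,r : A×A → End(V) two bilinear maps. Then (V,l,r) is a representation of A if and only if the operation on the direct sum A⊕V defined by {x1+u1, x2+u2, x3+u3} := {x1,x2,x3} + l(x1,x2)u3 − r(x1,x3)u2 + r(x2,x3)u1 (for xi in A, ui in V) is a 3-pre-Lie algebra structure on A⊕V. -/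
universe u v w

variable (K : Type u) [Field K] [CharZero K]

section TriHelpers

set_option linter.unusedSectionVars false

variable {M₁ M₂ M₃ M₄ : Type*}
  [AddCommGroup M₁] [Module K M₁] [AddCommGroup M₂] [Module K M₂]
  [AddCommGroup M₃] [Module K M₃] [AddCommGroup M₄] [Module K M₄]
  {f : M₁ → M₂ → M₃ → M₄}

theorem tz1 (hf : IsTrilinearMap K f) (y : M₂) (z : M₃) : f 0 y z = 0 := by
  have h := hf.1 1 0 0 y z; simpa using h
theorem tz2 (hf : IsTrilinearMap K f) (x : M₁) (z : M₃) : f x 0 z = 0 := by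
  have h := hf.2.1 1 x 0 0 z; simpa using h
theorem tz3 (hf : IsTrilinearMap K f) (x : M₁) (y : M₂) : f x y 0 = 0 := by
  have h := hf.2.2 1 x y 0 0; simpa using h
theorem tn3 (hf : IsTrilinearMap K f) (x : M₁) (y : M₂) (z : M₃) : f x y (-z) = - f x y z := by
  have h := hf.2.2 (-1) x y z 0; simpa [tz3 K hf] using h
theorem ta3 (hf : IsTrilinearMap K f) (x : M₁) (y : M₂) (z z' : M₃) :
    f x y (z + z') = f x y z + f x y z' := by
  have h := hf.2.2 1 x y z z'; simpa using h
theorem ts3 (hf : IsTrilinearMap K f) (x : M₁) (y : M₂) (z z' : M₃) :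
    f x y (z - z') = f x y z - f x y z' := by
  rw [sub_eq_add_neg, ta3 K hf, tn3 K hf, sub_eq_add_neg]

end TriHelpers

/-- `(V, l, r)` is a representation of a 3-pre-Lie algebra `(A, {·,·,·})` iff
the semidirect-product operation on `A ⊕ V` is a 3-pre-Lie structure. -/
theorem stmt6 {A : Type v} [AddCommGroup A] [Module K A]
    {V : Type w} [AddCommGroup V] [Module K V]
    (p : A → A → A → A) (hp : Is3PreLie K p)
    (l r : A → A → V → V) (hl : IsTrilinearMap K l) (hr : IsTrilinearMap K r) :
    Is3PreLieRep K p l r ↔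
    Is3PreLie K (fun (a b c : A × V) =>
      ((p a.1 b.1 c.1, l a.1 b.1 c.2 - r a.1 c.1 b.2 + r b.1 c.1 a.2) : A × V)) := by
  obtain ⟨hpT, hp0, hp1, hp2⟩ := hp
  constructor
  · rintro ⟨-, -, ⟨-, hlskew, hl3, hl4⟩, h1, h2, h3, h4⟩
    have FX : ∀ (a b c d : A) (v : V), r c d (l a b v) = - r c d (l b a v) := by
      intro a b c d v; rw [hlskew a b v, tn3 K hr]
    have H1 : ∀ (a b c d : A) (v : V),
        l a b (r c d v) = r c d (l a b v) + r c d (r a b v) - r c d (r b a v)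
          + r (p a b c + p b c a + p c a b) d v + r c (p a b d) v := by
      intro a b c d v
      have h := h1 a b c d v
      simp only [preC, ts3 K hr, ta3 K hr] at h
      linear_combination (norm := module) h
    have H3 : ∀ (a b c d : A) (v : V),
        r a (p b c d) v = r c d (l a b v) + r c d (r a b v) - r c d (r b a v)
          - r b d (l a c v) - r b d (r a c v) + r b d (r c a v) + l b c (r a d v) := by
      intro a b c d v
      have h := h3 a b c d v
      simp only [ts3 K hr, ta3 K hr] at h
      linear_combination (norm := module) h
    have H4 : ∀ (a b c d : A) (v : V),
        r c d (l a b v) + r c d (r a b v) - r c d (r b a v)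
          = l a b (r c d v) - r b (p a c d) v + r a (p b c d) v := by
      intro a b c d v
      have h := h4 a b c d v
      simp only [ts3 K hr, ta3 K hr] at h
      linear_combination (norm := module) h
    have HL3 : ∀ (a b c d : A) (v : V),
        l a b (l c d v) - l c d (l a b v)
          = l (p a b c + p b c a + p c a b) d v - l (p a b d + p b d a + p d a b) c v := by
      intro a b c d v; simpa [preC] using hl3 a b c d v
    have HL4 : ∀ (a b c d : A) (v : V),
        l (p a b c + p b c a + p c a b) d v
          = l a b (l c d v) + l b c (l a d v) + l c a (l b d v) := by
      intro a b c d v; simpa [preC] using hl4 a b c d v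
    have H2 : ∀ (a b c d : A) (v : V),
        r (p a b c + p b c a + p c a b) d v
          = l a b (r c d v) + l b c (r a d v) + l c a (r b d v) := by
      intro a b c d v; simpa [preC] using h2 a b c d v
    refine ⟨⟨?_, ?_, ?_⟩, ?_, ?_, ?_⟩
    · intro c x x' y z
      simp only [Prod.fst_add, Prod.snd_add, Prod.smul_fst, Prod.smul_snd, Prod.smul_mk,
        Prod.mk_add_mk, Prod.mk.injEq]
      refine ⟨hpT.1 c x.1 x'.1 y.1 z.1, ?_⟩
      rw [hl.1 c x.1 x'.1 y.1 z.2, hr.1 c x.1 x'.1 z.1 y.2, hr.2.2 c y.1 z.1 x.2 x'.2]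
      module
    · intro c x y y' z
      simp only [Prod.fst_add, Prod.snd_add, Prod.smul_fst, Prod.smul_snd, Prod.smul_mk,
        Prod.mk_add_mk, Prod.mk.injEq]
      refine ⟨hpT.2.1 c x.1 y.1 y'.1 z.1, ?_⟩
      rw [hl.2.1 c x.1 y.1 y'.1 z.2, hr.2.2 c x.1 z.1 y.2 y'.2, hr.1 c y.1 y'.1 z.1 x.2]
      module
    · intro c x y z z'
      simp only [Prod.fst_add, Prod.snd_add, Prod.smul_fst, Prod.smul_snd, Prod.smul_mk,
        Prod.mk_add_mk, Prod.mk.injEq]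
      refine ⟨hpT.2.2 c x.1 y.1 z.1 z'.1, ?_⟩
      rw [hl.2.2 c x.1 y.1 z.2 z'.2, hr.2.1 c x.1 z.1 z'.1 y.2, hr.2.1 c y.1 z.1 z'.1 x.2]
      module
    · intro x y z
      simp only [Prod.neg_mk, Prod.mk.injEq]
      exact ⟨hp0 x.1 y.1 z.1, by linear_combination (norm := module) hlskew x.1 y.1 z.2⟩
    · intro x1 x2 x3 x4 x5
      obtain ⟨a1, u1⟩ := x1; obtain ⟨a2, u2⟩ := x2; obtain ⟨a3, u3⟩ := x3
      obtain ⟨a4, u4⟩ := x4; obtain ⟨a5, u5⟩ := x5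
      simp only [preC, Prod.mk_add_mk, Prod.mk.injEq, ts3 K hl, ta3 K hl, ts3 K hr, ta3 K hr,
        tn3 K hl, tn3 K hr]
      refine ⟨by simpa [preC] using hp1 a1 a2 a3 a4 a5, ?_⟩
      linear_combination (norm := module)
        HL3 a1 a2 a3 a4 u5 - hlskew a3 (p a1 a2 a4 + p a2 a4 a1 + p a4 a1 a2) u5
          - H1 a1 a2 a3 a5 u4 + H1 a1 a2 a4 a5 u3
          - H3 a1 a3 a4 a5 u2 - FX a3 a1 a4 a5 u2 + FX a4 a1 a3 a5 u2
          + H3 a2 a3 a4 a5 u1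
    · intro x1 x2 x3 x4 x5
      obtain ⟨a1, u1⟩ := x1; obtain ⟨a2, u2⟩ := x2; obtain ⟨a3, u3⟩ := x3
      obtain ⟨a4, u4⟩ := x4; obtain ⟨a5, u5⟩ := x5
      simp only [preC, Prod.mk_add_mk, Prod.mk.injEq, ts3 K hl, ta3 K hl, ts3 K hr, ta3 K hr,
        tn3 K hl, tn3 K hr]
      refine ⟨by simpa [preC] using hp2 a1 a2 a3 a4 a5, ?_⟩
      linear_combination (norm := module)
        HL4 a1 a2 a3 a4 u5 - H2 a1 a2 a3 a5 u4 + H4 a1 a2 a4 a5 u3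
          + H4 a3 a1 a4 a5 u2 + H4 a2 a3 a4 a5 u1
  · intro hq
    obtain ⟨-, hq0, hq1, hq2⟩ := hq
    have lskew : ∀ (x y : A) (v : V), l x y v = - l y x v := by
      intro x y v
      have h := congrArg Prod.snd (hq0 (x, 0) (y, 0) (0, v))
      simpa [tz2 K hr, tz3 K hr, tz3 K hl] using h
    have FX : ∀ (a b c d : A) (v : V), r c d (l a b v) = - r c d (l b a v) := by
      intro a b c d v; rw [lskew a b v, tn3 K hr]
    refine ⟨hl, hr, ⟨hl, lskew, ?_, ?_⟩, ?_, ?_, ?_, ?_⟩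
    · intro x1 x2 x3 x4 v
      have h := congrArg Prod.snd (hq1 (x1, 0) (x2, 0) (x3, 0) (x4, 0) (0, v))
      simp [preC, tz1 K hpT, tz2 K hpT, tz3 K hpT, tz1 K hl, tz2 K hl, tz3 K hl,
        tz1 K hr, tz2 K hr, tz3 K hr, tn3 K hl, tn3 K hr, ta3 K hl, ta3 K hr,
        ts3 K hl, ts3 K hr] at h
      simp only [preC]
      linear_combination (norm := module) h + lskew x3 (p x1 x2 x4 + p x2 x4 x1 + p x4 x1 x2) v
    · intro x1 x2 x3 x4 v
      have h := congrArg Prod.snd (hq2 (x1, 0) (x2, 0) (x3, 0) (x4, 0) (0, v))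
      simp [preC, tz1 K hpT, tz2 K hpT, tz3 K hpT, tz1 K hl, tz2 K hl, tz3 K hl,
        tz1 K hr, tz2 K hr, tz3 K hr, tn3 K hl, tn3 K hr, ta3 K hl, ta3 K hr,
        ts3 K hl, ts3 K hr] at h
      simp only [preC]
      linear_combination (norm := module) h
    · intro x1 x2 x3 x4 v
      have h := congrArg Prod.snd (hq1 (x1, 0) (x2, 0) (x3, 0) (0, v) (x4, 0))
      simp [preC, tz1 K hpT, tz2 K hpT, tz3 K hpT, tz1 K hl, tz2 K hl, tz3 K hl,
        tz1 K hr, tz2 K hr, tz3 K hr, tn3 K hl, tn3 K hr, ta3 K hl, ta3 K hr,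
        ts3 K hl, ts3 K hr] at h
      simp only [preC, ts3 K hr, ta3 K hr]
      linear_combination (norm := module) -h
    · intro x1 x2 x3 x4 v
      have h := congrArg Prod.snd (hq2 (x1, 0) (x2, 0) (x3, 0) (0, v) (x4, 0))
      simp [preC, tz1 K hpT, tz2 K hpT, tz3 K hpT, tz1 K hl, tz2 K hl, tz3 K hl,
        tz1 K hr, tz2 K hr, tz3 K hr, tn3 K hl, tn3 K hr, ta3 K hl, ta3 K hr,
        ts3 K hl, ts3 K hr] at h
      simp only [preC]
      linear_combination (norm := module) -h
    · intro x1 x2 x3 x4 v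
      have h := congrArg Prod.snd (hq1 (x1, 0) (0, v) (x2, 0) (x3, 0) (x4, 0))
      simp [preC, tz1 K hpT, tz2 K hpT, tz3 K hpT, tz1 K hl, tz2 K hl, tz3 K hl,
        tz1 K hr, tz2 K hr, tz3 K hr, tn3 K hl, tn3 K hr, ta3 K hl, ta3 K hr,
        ts3 K hl, ts3 K hr] at h
      simp only [ts3 K hr, ta3 K hr]
      linear_combination (norm := module) -h - FX x1 x2 x3 x4 v + FX x1 x3 x2 x4 v
    · intro x1 x2 x3 x4 v
      have h := congrArg Prod.snd (hq2 (x1, 0) (x2, 0) (0, v) (x3, 0) (x4, 0))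
      simp [preC, tz1 K hpT, tz2 K hpT, tz3 K hpT, tz1 K hl, tz2 K hl, tz3 K hl,
        tz1 K hr, tz2 K hr, tz3 K hr, tn3 K hl, tn3 K hr, ta3 K hl, ta3 K hr,
        ts3 K hl, ts3 K hr] at h
      simp only [ts3 K hr, ta3 K hr]
      linear_combination (norm := module) h
end

section
/- Let (V,l,r) be a representation of a 3-pre-Lie algebra (A,{·,·,·}) over a field K of characteristic 0. Then the bilinear map ρ : A×A → End(V) defined by ρ(x,y) = l(x,y) − r(y,x) + r(x,y) is a representation of the sub-adjacent 3-Lie algebra (A,[·,·,·]^C) on V, where [x,y,z]^C = {x,y,z} + {y,z,x} + {z,x,y}. -/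
universe u v w

variable (K : Type u) [Field K] [CharZero K]

/-- If `(V, l, r)` is a representation of a 3-pre-Lie algebra, then
`ρ = l - r∘τ + r` is a representation of the sub-adjacent 3-Lie algebra on `V`. -/
theorem stmt7 {A : Type v} [AddCommGroup A] [Module K A]
    {V : Type w} [AddCommGroup V] [Module K V]
    (p : A → A → A → A) (hp : Is3PreLie K p)
    (l r : A → A → V → V) (hrep : Is3PreLieRep K p l r) :
    Is3LieRep K (preC p) (fun x y v => l x y v - r y x v + r x y v) := by
  
  obtain ⟨hpt, hp0, hp1, hp2⟩ := hp
  obtain ⟨hlt, hrt, hlrep, hR1, hR2, hR3, hR4⟩ := hrep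
  obtain ⟨hlt', hlskew, hli, hlii⟩ := hlrep
  -- derived linearity lemmas
  have l1zero : ∀ (b : A) (w : V), l 0 b w = 0 := fun b w => by
    have h := hlt.1 1 0 0 b w; simpa using h
  have l1add : ∀ (u u' b : A) (w : V), l (u + u') b w = l u b w + l u' b w := fun u u' b w => by
    have h := hlt.1 1 u u' b w; simpa using h
  have l1neg : ∀ (u b : A) (w : V), l (-u) b w = - l u b w := fun u b w => by
    have h := hlt.1 (-1 : K) u 0 b w; simpa [l1zero] using h
  have r1zero : ∀ (b : A) (w : V), r 0 b w = 0 := fun b w => by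
    have h := hrt.1 1 0 0 b w; simpa using h
  have r1add : ∀ (u u' b : A) (w : V), r (u + u') b w = r u b w + r u' b w := fun u u' b w => by
    have h := hrt.1 1 u u' b w; simpa using h
  have r1neg : ∀ (u b : A) (w : V), r (-u) b w = - r u b w := fun u b w => by
    have h := hrt.1 (-1 : K) u 0 b w; simpa [r1zero] using h
  have r2zero : ∀ (a : A) (w : V), r a 0 w = 0 := fun a w => by
    have h := hrt.2.1 1 a 0 0 w; simpa using h
  have r2add : ∀ (a u u' : A) (w : V), r a (u + u') w = r a u w + r a u' w := fun a u u' w => by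
    have h := hrt.2.1 1 a u u' w; simpa using h
  have r2neg : ∀ (a u : A) (w : V), r a (-u) w = - r a u w := fun a u w => by
    have h := hrt.2.1 (-1 : K) a u 0 w; simpa [r2zero] using h
  have l3zero : ∀ (a b : A), l a b (0 : V) = 0 := fun a b => by
    have h := hlt.2.2 1 a b 0 0; simpa using h
  have l3add : ∀ (a b : A) (w w' : V), l a b (w + w') = l a b w + l a b w' := fun a b w w' => by
    have h := hlt.2.2 1 a b w w'; simpa using h
  have l3neg : ∀ (a b : A) (w : V), l a b (-w) = - l a b w := fun a b w => by
    have h := hlt.2.2 (-1 : K) a b w 0; simpa [l3zero] using h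
  have l3sub : ∀ (a b : A) (w w' : V), l a b (w - w') = l a b w - l a b w' := fun a b w w' => by
    rw [sub_eq_add_neg, l3add, l3neg, ← sub_eq_add_neg]
  have r3zero : ∀ (a b : A), r a b (0 : V) = 0 := fun a b => by
    have h := hrt.2.2 1 a b 0 0; simpa using h
  have r3add : ∀ (a b : A) (w w' : V), r a b (w + w') = r a b w + r a b w' := fun a b w w' => by
    have h := hrt.2.2 1 a b w w'; simpa using h
  have r3neg : ∀ (a b : A) (w : V), r a b (-w) = - r a b w := fun a b w => by
    have h := hrt.2.2 (-1 : K) a b w 0; simpa [r3zero] using h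
  have r3sub : ∀ (a b : A) (w w' : V), r a b (w - w') = r a b w - r a b w' := fun a b w w' => by
    rw [sub_eq_add_neg, r3add, r3neg, ← sub_eq_add_neg]
  refine ⟨⟨?_, ?_, ?_⟩, ?_, ?_, ?_⟩
  · intro c x x' y z
    simp only [hlt.1, hrt.1, hrt.2.1, smul_add, smul_sub]
    abel
  · intro c x y y' z
    simp only [hlt.2.1, hrt.1, hrt.2.1, smul_add, smul_sub]
    abel
  · intro c x y z z'
    simp only [hlt.2.2, hrt.2.2, smul_add, smul_sub]
    abel
  · intro x y v
    simp only [hlskew x y]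
    abel
  · intro x1 x2 x3 x4 v
    have AE0 := hR1 x1 x2 x3 x4 v
    have AE1 := hR1 x1 x2 x4 x3 v
    have AE2 := hR1 x1 x3 x4 x2 v
    have AE3 := hR1 x1 x4 x3 x2 v
    have AE4 := hR1 x2 x3 x4 x1 v
    have AE5 := hR1 x2 x4 x3 x1 v
    have AE6 := hR1 x3 x4 x1 x2 v
    have AE7 := hR1 x3 x4 x2 x1 v
    have AE8 := hR2 x1 x3 x4 x2 v
    have AE9 := hR2 x2 x3 x4 x1 v
    have AE10 := hR3 x1 x3 x4 x2 v
    have AE11 := hR3 x2 x3 x4 x1 v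
    have AE12 := hli x1 x2 x3 x4 v
    simp only [preC, hlskew x2 x1, hlskew x3 x1, hlskew x3 x2, hlskew x4 x1,
      hlskew x4 x2, hlskew x4 x3, hp0 x2 x1, hp0 x3 x1, hp0 x3 x2, hp0 x4 x1,
      hp0 x4 x2, hp0 x4 x3, l1add, l1neg, r1add, r1neg, r2add, r2neg,
      l3sub, l3add, l3neg, r3sub, r3add, r3neg, neg_neg] at AE0 AE1 AE2 AE3 AE4 AE5 AE6 AE7 AE8 AE9 AE10 AE11 AE12 ⊢
    linear_combination (norm := abel) AE0 - AE1 + AE2 - AE3 - AE4 + AE5 - AE6 + AE7 + AE8 - AE9 - AE10 + AE11 + AE12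
  · intro x1 x2 x3 x4 v
    have BE0 := hR1 x1 x2 x4 x3 v
    have BE1 := hR1 x1 x3 x4 x2 v
    have BE2 := hR1 x2 x3 x4 x1 v
    have BE3 := hR1 x2 x4 x1 x3 v
    have BE4 := hR1 x3 x4 x1 x2 v
    have BE5 := hR1 x3 x4 x2 x1 v
    have BE6 := hR2 x1 x2 x3 x4 v
    have BE7 := hR3 x1 x2 x4 x3 v
    have BE8 := hR3 x1 x3 x4 x2 v
    have BE9 := hR3 x2 x3 x4 x1 v
    have BE10 := hlii x1 x2 x3 x4 v
    simp only [preC, hlskew x2 x1, hlskew x3 x1, hlskew x3 x2, hlskew x4 x1,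
      hlskew x4 x2, hlskew x4 x3, hp0 x2 x1, hp0 x3 x1, hp0 x3 x2, hp0 x4 x1,
      hp0 x4 x2, hp0 x4 x3, l1add, l1neg, r1add, r1neg, r2add, r2neg,
      l3sub, l3add, l3neg, r3sub, r3add, r3neg, neg_neg] at BE0 BE1 BE2 BE3 BE4 BE5 BE6 BE7 BE8 BE9 BE10 ⊢
    linear_combination (norm := abel) BE0 - BE1 + BE2 - BE3 + BE4 - BE5 + BE6 - BE7 + BE8 - BE9 + BE10
end

section
/- Let (V,l,r) be a representation of a 3-pre-Lie algebra (A,{·,·,·}) over a field K of characteristic 0, and let V* be the dual space of V. For a bilinear map f : A×A → End(V), define f* : A×A → End(V*) by (f*(x,y)ξ)(v) = −ξ(f(x,y)v), and define the pair of bilinear maps l° , r° : A×A → End(V*) by l°(x,y) = l*(x,y) − r*(y,x) + r*(x,y) and r°(x,y) = −r*(x,y). Then (V*, l°, r°) is a representation of the 3-pre-Lie algebra (A,{·,·,·}), called the dual representation of (V,l,r). -/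
/-!
Write `f* ξ = -ξ ∘ f`, so that `f* (g* ξ) = ξ ∘ g ∘ f`. Then `l° = μ*` and `r° = -r*`, and
`l° + r° - r° ∘ τ = l*`. Hence each axiom for `(l°, r°)` is the transpose of an identity in
`End V` whose compositions are those of the corresponding axiom for `(l, r)` in reverse order.
For (rep1) and (rep4) the reversed identity is the axiom itself; the reversed forms of (rep2),
(rep3) and of axiom (ii) of a 3-Lie representation are linear combinations of instances of the
axioms, and `l°` is a 3-Lie representation because `μ = l + r - r ∘ τ` is one.
-/

universe u v w

variable (K : Type u) [Field K] [CharZero K]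

section Trilinear

variable {K : Type*} [Field K]
variable {M₁ M₂ M₃ M₄ : Type*}
  [AddCommGroup M₁] [Module K M₁] [AddCommGroup M₂] [Module K M₂]
  [AddCommGroup M₃] [Module K M₃] [AddCommGroup M₄] [Module K M₄]
  {f : M₁ → M₂ → M₃ → M₄}

namespace IsTrilinearMap

theorem map_add₁ (hf : IsTrilinearMap K f) (x x' : M₁) (y : M₂) (z : M₃) :
    f (x + x') y z = f x y z + f x' y z := by
  simpa using hf.1 1 x x' y z

theorem map_add₂ (hf : IsTrilinearMap K f) (x : M₁) (y y' : M₂) (z : M₃) :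
    f x (y + y') z = f x y z + f x y' z := by
  simpa using hf.2.1 1 x y y' z

theorem map_add₃ (hf : IsTrilinearMap K f) (x : M₁) (y : M₂) (z z' : M₃) :
    f x y (z + z') = f x y z + f x y z' := by
  simpa using hf.2.2 1 x y z z'

theorem map_smul₃ (hf : IsTrilinearMap K f) (c : K) (x : M₁) (y : M₂) (z : M₃) :
    f x y (c • z) = c • f x y z := by
  have hzero : f x y 0 = 0 := by simpa using hf.map_add₃ x y 0 0
  simpa [hzero] using hf.2.2 c x y z 0

def linearMap (hf : IsTrilinearMap K f) (x : M₁) (y : M₂) : M₃ →ₗ[K] M₄ where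
  toFun := f x y
  map_add' := hf.map_add₃ x y
  map_smul' c := hf.map_smul₃ c x y

theorem map_neg₃ (hf : IsTrilinearMap K f) (x : M₁) (y : M₂) (z : M₃) :
    f x y (-z) = -f x y z :=
  (hf.linearMap x y).map_neg z

theorem map_sub₃ (hf : IsTrilinearMap K f) (x : M₁) (y : M₂) (z z' : M₃) :
    f x y (z - z') = f x y z - f x y z' :=
  (hf.linearMap x y).map_sub z z'

theorem neg (hf : IsTrilinearMap K f) : IsTrilinearMap K (fun x y z => -f x y z) := by
  refine ⟨fun c x x' y z => ?_, fun c x y y' z => ?_, fun c x y z z' => ?_⟩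
  · dsimp only; rw [hf.1]; module
  · dsimp only; rw [hf.2.1]; module
  · dsimp only; rw [hf.2.2]; module

end IsTrilinearMap

end Trilinear

theorem IsTrilinearMap.transpose {K : Type*} [Field K] {M₁ M₂ M : Type*}
    [AddCommGroup M₁] [Module K M₁] [AddCommGroup M₂] [Module K M₂] [AddCommGroup M] [Module K M]
    {f : M₁ → M₂ → M → M} {g : M₁ → M₂ → Module.Dual K M → Module.Dual K M}
    (hf : IsTrilinearMap K f) (hg : ∀ x y ξ z, g x y ξ z = ξ (f x y z)) :
    IsTrilinearMap K g := by
  refine ⟨fun c x x' y ξ => ?_, fun c x y y' ξ => ?_, fun c x y ξ ξ' => ?_⟩ <;> ext z <;>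
    simp only [hg, hf.1, hf.2.1, LinearMap.add_apply, LinearMap.smul_apply, map_add, map_smul]

section Representations

variable {K : Type*} [Field K]
variable {A : Type*} [AddCommGroup A] [Module K A] {V : Type*} [AddCommGroup V] [Module K V]

namespace Is3LieRep

variable {br : A → A → A → A} {ρ : A → A → V → V}

theorem apply_br_eq_reversed (hρ : Is3LieRep K br ρ) (a b c d : A) (v : V) :
    ρ (br a b c) d v = -(ρ c d (ρ a b v) + ρ a d (ρ b c v) + ρ b d (ρ c a v)) := by
  obtain ⟨htri, hskew, hcomm, hbr⟩ := hρ
  linear_combination (norm := (simp only [htri.map_neg₃]; abel))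
    hbr a b d c v - hcomm a b c d v + congrArg (ρ a b) (hskew c d v) + hskew a d (ρ b c v)
      + congrArg (ρ b d) (hskew c a v)

theorem dual (hρ : Is3LieRep K br ρ) {ρ' : A → A → Module.Dual K V → Module.Dual K V}
    (hρ' : ∀ x y ξ v, ρ' x y ξ v = -ξ (ρ x y v)) :
    Is3LieRep K br ρ' := by
  have hrev := hρ.apply_br_eq_reversed
  obtain ⟨htri, hskew, hcomm, -⟩ := hρ
  refine ⟨htri.neg.transpose fun x y ξ v => by rw [hρ', map_neg], fun x y ξ => ?_,
    fun a b c d ξ => ?_, fun a b c d ξ => ?_⟩ <;> ext v <;>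
    simp only [hρ', LinearMap.add_apply, LinearMap.sub_apply, LinearMap.neg_apply, neg_neg]
  · rw [hskew, map_neg, neg_neg]
  · linear_combination (norm := (simp only [map_sub]; ring)) -congrArg ξ (hcomm a b c d v)
  · linear_combination (norm := (simp only [map_add, map_neg]; ring))
      -congrArg ξ (hrev a b c d v)

end Is3LieRep

variable {p : A → A → A → A} {l r : A → A → V → V}

def repMu (l r : A → A → V → V) : A → A → V → V :=
  fun x y v => l x y v + r x y v - r y x v

theorem isTrilinearMap_repMu (hl : IsTrilinearMap K l) (hr : IsTrilinearMap K r) :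
    IsTrilinearMap K (repMu l r) := by
  refine ⟨fun c x x' y v => ?_, fun c x y y' v => ?_, fun c x y v v' => ?_⟩ <;>
    simp only [repMu, hl.1, hl.2.1, hl.2.2, hr.1, hr.2.1, hr.2.2] <;> module

namespace Is3PreLieRep

theorem r_p_eq_reversed (hrep : Is3PreLieRep K p l r) (a b c d : A) (v : V) :
    r a (p b c d) v = l a c (r b d v) - l a b (r c d v) - r a d (repMu l r b c v) := by
  obtain ⟨-, -, ⟨-, hl_skew, -, -⟩, -, -, h3, h4⟩ := hrep
  unfold repMu
  linear_combination (norm := abel) h3 b a c d v + h4 b a c d v + hl_skew a b (r c d v)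

theorem r_preC_eq_reversed (hrep : Is3PreLieRep K p l r) (a b c d : A) (v : V) :
    r (preC p a b c) d v
      = -(r c d (repMu l r a b v) + r a d (repMu l r b c v) + r b d (repMu l r c a v)) := by
  have h3' := hrep.r_p_eq_reversed a b c d v
  obtain ⟨hl, hr, ⟨-, hl_skew, -, -⟩, -, h2, h3, -⟩ := hrep
  unfold repMu at *
  linear_combination (norm := (simp only [hr.map_add₃, hr.map_sub₃, hr.map_neg₃]; abel))
    h2 a b c d v - h3 a b c d v + h3' + hl_skew a c (r b d v) + congrArg (r b d) (hl_skew a c v)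

theorem repMu_commutator (hrep : Is3PreLieRep K p l r) (a b c d : A) (v : V) :
    repMu l r a b (repMu l r c d v) - repMu l r c d (repMu l r a b v)
      = repMu l r (preC p a b c) d v - repMu l r (preC p a b d) c v := by
  have h2' := hrep.r_preC_eq_reversed
  have h3' := hrep.r_p_eq_reversed
  obtain ⟨hl, hr, ⟨-, hl_skew, hl_comm, -⟩, h1, -, -, -⟩ := hrep
  unfold repMu at *
  linear_combination (norm := (simp only [preC, hl.map_add₁, hr.map_add₁, hr.map_add₂,
      hl.map_add₃, hl.map_sub₃, hr.map_add₃, hr.map_sub₃, hr.map_neg₃]; abel))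
    hl_comm a b c d v + h1 a b c d v - h1 a b d c v - h2' a d c b v - h1 b c d a v - h2' b c d a v
      - h1 c a d b v - h3' c b d a v - h3' c d a b v + hl_skew b c (r d a v)
      + congrArg (r a b) (hl_skew c d v) + congrArg (r c a) (hl_skew b d v)
      + congrArg (r c b) (hl_skew a d v)

theorem repMu_preC (hrep : Is3PreLieRep K p l r) (a b c d : A) (v : V) :
    repMu l r (preC p a b c) d v
      = repMu l r a b (repMu l r c d v) + repMu l r b c (repMu l r a d v)
        + repMu l r c a (repMu l r b d v) := by
  obtain ⟨hl, hr, ⟨-, -, -, hl_br⟩, h1, h2, h3, -⟩ := hrep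
  unfold repMu
  linear_combination (norm := (simp only [preC, hl.map_add₁, hr.map_add₁, hr.map_add₂,
      hl.map_add₃, hl.map_sub₃, hr.map_add₃, hr.map_sub₃]; abel))
    hl_br a b c d v + h2 a b c d v + h1 a b d c v - h3 a b d c v - h1 a d c b v + h1 b c d a v
      - h3 b c d a v - h1 b d a c v + h1 c a d b v - h3 c a d b v - h1 c d b a v

theorem is3LieRep_repMu (hrep : Is3PreLieRep K p l r) : Is3LieRep K (preC p) (repMu l r) := by
  refine ⟨isTrilinearMap_repMu hrep.1 hrep.2.1, fun x y v => ?_, hrep.repMu_commutator,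
    hrep.repMu_preC⟩
  obtain ⟨-, -, ⟨-, hl_skew, -, -⟩, -⟩ := hrep
  rw [repMu, repMu, hl_skew x y]
  abel

theorem dual (hrep : Is3PreLieRep K p l r) {lo ro : A → A → Module.Dual K V → Module.Dual K V}
    (hlo : ∀ x y ξ v, lo x y ξ v = -ξ (l x y v) + ξ (r y x v) - ξ (r x y v))
    (hro : ∀ x y ξ v, ro x y ξ v = ξ (r x y v)) :
    Is3PreLieRep K p lo ro := by
  have hlo_mu : ∀ x y ξ v, lo x y ξ v = -ξ (repMu l r x y v) := fun x y ξ v => by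
    rw [hlo, repMu, map_sub, map_add]; ring
  have hlo_rep := hrep.is3LieRep_repMu.dual hlo_mu
  have h2 := hrep.r_preC_eq_reversed
  have h3 := hrep.r_p_eq_reversed
  obtain ⟨-, hr, -, h1, -, -, h4⟩ := hrep
  simp only [repMu, hr.map_add₃, hr.map_sub₃] at h1 h2 h3 h4
  refine ⟨hlo_rep.1, hr.transpose hro, hlo_rep, fun a b c d ξ => ?_, fun a b c d ξ => ?_,
    fun a b c d ξ => ?_, fun a b c d ξ => ?_⟩ <;> ext v <;>
    simp only [hlo, hro, LinearMap.add_apply, LinearMap.sub_apply]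
  · linear_combination (norm := (simp only [map_add, map_sub]; ring)) congrArg ξ (h1 a b c d v)
  · linear_combination (norm := (simp only [map_add, map_sub, map_neg]; ring))
      congrArg ξ (h2 a b c d v)
  · linear_combination (norm := (simp only [map_add, map_sub]; ring)) congrArg ξ (h3 a b c d v)
  · linear_combination (norm := (simp only [map_add, map_sub]; ring)) congrArg ξ (h4 a b c d v)

end Is3PreLieRep

end Representations

theorem stmt8 {A : Type v} [AddCommGroup A] [Module K A]
    {V : Type w} [AddCommGroup V] [Module K V]
    (p : A → A → A → A)
    (l r : A → A → V → V) (hrep : Is3PreLieRep K p l r) :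
    ∃ lo ro : A → A → Module.Dual K V → Module.Dual K V,
      (∀ (x y : A) (ξ : Module.Dual K V) (v : V),
        lo x y ξ v = - ξ (l x y v) + ξ (r y x v) - ξ (r x y v)) ∧
      (∀ (x y : A) (ξ : Module.Dual K V) (v : V),
        ro x y ξ v = ξ (r x y v)) ∧
      Is3PreLieRep K p lo ro := by
  let L := hrep.1.linearMap
  let R := hrep.2.1.linearMap
  refine ⟨fun x y ξ => -(ξ ∘ₗ L x y) + ξ ∘ₗ R y x - ξ ∘ₗ R x y, fun x y ξ => ξ ∘ₗ R x y,
    fun _ _ _ _ => rfl, fun _ _ _ _ => rfl, hrep.dual (fun _ _ _ _ => rfl) fun _ _ _ _ => rfl⟩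
end

section
/- Let (A,↖,↗) be a 3-L-dendriform algebra over a field K of characteristic 0. Then the horizontal operation {x,y,z}^h = ↖(x,y,z) + ↗(x,y,z) − ↗(y,x,z) defines a 3-pre-Lie algebra structure on A. -/
universe u v w

variable (K : Type u) [Field K] [CharZero K]

section Helpers

variable {A : Type v} [AddCommGroup A] [Module K A]

theorem tri_add1 {f : A → A → A → A} (hf : IsTrilinearMap K f) (x x' y z : A) :
    f (x + x') y z = f x y z + f x' y z := by simpa using hf.1 1 x x' y z

theorem tri_sub1 {f : A → A → A → A} (hf : IsTrilinearMap K f) (x x' y z : A) :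
    f (x - x') y z = f x y z - f x' y z := by
  have h := hf.1 (-1 : K) x' x y z
  simp only [neg_one_smul, ← sub_eq_neg_add] at h
  exact h

theorem tri_add2 {f : A → A → A → A} (hf : IsTrilinearMap K f) (x y y' z : A) :
    f x (y + y') z = f x y z + f x y' z := by simpa using hf.2.1 1 x y y' z

theorem tri_sub2 {f : A → A → A → A} (hf : IsTrilinearMap K f) (x y y' z : A) :
    f x (y - y') z = f x y z - f x y' z := by
  have h := hf.2.1 (-1 : K) x y' y z
  simp only [neg_one_smul, ← sub_eq_neg_add] at h
  exact h

theorem tri_add3 {f : A → A → A → A} (hf : IsTrilinearMap K f) (x y z z' : A) :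
    f x y (z + z') = f x y z + f x y z' := by simpa using hf.2.2 1 x y z z'

theorem tri_sub3 {f : A → A → A → A} (hf : IsTrilinearMap K f) (x y z z' : A) :
    f x y (z - z') = f x y z - f x y z' := by
  have h := hf.2.2 (-1 : K) x y z' z
  simp only [neg_one_smul, ← sub_eq_neg_add] at h
  exact h

end Helpers

/-- The horizontal operation `{·,·,·}^h` of a 3-L-dendriform algebra defines a
3-pre-Lie algebra structure on `A`. -/
theorem stmt9 {A : Type v} [AddCommGroup A] [Module K A]
    (nw ne : A → A → A → A) (hden : Is3LDendriform K nw ne) :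
    Is3PreLie K (hOp nw ne) := by
  obtain ⟨hnw, hne, h0, h1, h2, h3, h4, h5, h6⟩ := hden
  refine ⟨⟨?_, ?_, ?_⟩, ?_, ?_, ?_⟩
  · intro c x x' y z
    simp only [hOp]
    rw [hnw.1, hne.1, hne.2.1]
    module
  · intro c x y y' z
    simp only [hOp]
    rw [hnw.2.1, hne.2.1, hne.1]
    module
  · intro c x y z z'
    simp only [hOp]
    rw [hnw.2.2, hne.2.2, hne.2.2]
    module
  · intro x y z
    simp only [hOp]
    linear_combination (norm := abel1) h0 x y z
  · intro x1 x2 x3 x4 x5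
    simp only [preC, cOp, hOp, vOp] at h1 h2 h3 ⊢
    simp only [tri_add1 K hnw, tri_sub1 K hnw, tri_add2 K hnw, tri_sub2 K hnw, tri_add3 K hnw,
      tri_sub3 K hnw, tri_add1 K hne, tri_sub1 K hne, tri_add2 K hne, tri_sub2 K hne, tri_add3 K hne,
      tri_sub3 K hne] at h1 h2 h3 ⊢
    linear_combination (norm := abel1) h1 x1 x2 x3 x4 x5 - h2 x1 x2 x3 x5 x4
      + h2 x1 x2 x4 x5 x3 + h3 x2 x3 x4 x5 x1 + h2 x3 x4 x1 x5 x2 - h3 x3 x4 x1 x5 x2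
      - h2 x4 x1 x3 x5 x2
      - h0 (nw x1 x2 x4) x3 x5 - h0 (ne x1 x2 x4) x3 x5 + h0 (ne x1 x4 x2) x3 x5
      + h0 (ne x2 x1 x4) x3 x5 - h0 (nw x2 x4 x1) x3 x5 - h0 (ne x2 x4 x1) x3 x5
      - h0 (nw x4 x1 x2) x3 x5 - h0 (ne x4 x1 x2) x3 x5 + h0 (ne x4 x2 x1) x3 x5
  · intro x1 x2 x3 x4 x5
    simp only [preC, cOp, hOp, vOp] at h4 h5 h6 ⊢
    simp only [tri_add1 K hnw, tri_sub1 K hnw, tri_add2 K hnw, tri_sub2 K hnw, tri_add3 K hnw,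
      tri_sub3 K hnw, tri_add1 K hne, tri_sub1 K hne, tri_add2 K hne, tri_sub2 K hne, tri_add3 K hne,
      tri_sub3 K hne] at h4 h5 h6 ⊢
    linear_combination (norm := abel1) h4 x1 x2 x3 x4 x5 - h5 x1 x2 x3 x5 x4
      - h6 x1 x2 x4 x5 x3 - h6 x2 x3 x4 x5 x1 - h6 x3 x1 x4 x5 x2
end

section
/- Let (A,↖,↗) be a 3-L-dendriform algebra over a field K of characteristic 0. Define L↖, R↗ : A×A → End(A) by L↖(x,y)z = ↖(x,y,z) and R↗(x,y)z = ↗(z,x,y). Then (A, L↖, R↗) is a representation of the associated horizontal 3-pre-Lie algebra (A, {·,·,·}^h), where {x,y,z}^h = ↖(x,y,z) + ↗(x,y,z) − ↗(y,x,z). -/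
universe u v w

variable (K : Type u) [Field K] [CharZero K]

/-- `(A, L↖, R↗)`, with `L↖(x,y)z = ↖(x,y,z)` and `R↗(x,y)z = ↗(z,x,y)`, is a
representation of the associated horizontal 3-pre-Lie algebra `(A, {·,·,·}^h)`. -/
theorem stmt12 {A : Type v} [AddCommGroup A] [Module K A]
    (nw ne : A → A → A → A) (hden : Is3LDendriform K nw ne) :
    Is3PreLieRep K (hOp nw ne) (fun x y z => nw x y z) (fun x y z => ne z x y) := by
  obtain ⟨hnw, hne, hL0, hL1, hL2, hL3, hL4, hL5, hL6⟩ := hden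
  refine ⟨hnw, ⟨?_, ?_, ?_⟩, ⟨hnw, ?_, ?_, hL4⟩, ?_, ?_, ?_, ?_⟩
  · exact fun c x x' y z => hne.2.1 c z x x' y
  · exact fun c x y y' z => hne.2.2 c z x y y'
  · exact fun c x y z z' => hne.1 c z z' x y
  · intro x y v
    exact eq_neg_of_add_eq_zero_left (hL0 x y v)
  · exact fun x1 x2 x3 x4 v => hL1 x1 x2 x3 x4 v
  · intro x1 x2 x3 x4 v
    have h := hL2 x1 x2 x3 x4 v
    simp only [vOp, cOp, preC, hOp] at h ⊢
    linear_combination (norm := abel) h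
  · exact fun x1 x2 x3 x4 v => hL5 x1 x2 x3 x4 v
  · intro x1 x2 x3 x4 v
    have h := hL3 x1 x2 x3 x4 v
    simp only [vOp] at h
    linear_combination (norm := abel) h
  · intro x1 x2 x3 x4 v
    have h := hL6 x1 x2 x3 x4 v
    simp only [vOp, cOp, preC, hOp] at h ⊢
    linear_combination (norm := abel) -h
end

section
/- Let (A,{·,·,·}) be a 3-pre-Lie algebra over a field K of characteristic 0, let (V,l,r) be a representation of A, and let T : V → A be an O-operator associated to (V,l,r). Then the operations ↖(u,v,w) := l(Tu,Tv)w and ↗(u,v,w) := r(Tv,Tw)u define a 3-L-dendriform algebra structure on V. Moreover, T is a homomorphism of 3-pre-Lie algebras from the associated horizontal 3-pre-Lie algebra (V,{·,·,·}^h_V) to (A,{·,·,·}), i.e., T({u,v,w}^h_V) = {Tu,Tv,Tw} where {u,v,w}^h_V = ↖(u,v,w) + ↗(u,v,w) − ↗(v,u,w). -/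
universe u v w

variable (K : Type u) [Field K] [CharZero K]

/-- An `𝒪`-operator `T` on a 3-pre-Lie algebra associated to `(V, l, r)`
induces a 3-L-dendriform structure `↖(u,v,w) = l(Tu,Tv)w`, `↗(u,v,w) = r(Tv,Tw)u` on `V`;
moreover `T` is a homomorphism from the associated horizontal 3-pre-Lie algebra on `V`
to `(A, {·,·,·})`. -/
theorem stmt14 {A : Type v} [AddCommGroup A] [Module K A]
    {V : Type w} [AddCommGroup V] [Module K V]
    (p : A → A → A → A) (hp : Is3PreLie K p)
    (l r : A → A → V → V) (hrep : Is3PreLieRep K p l r)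
    (T : V →ₗ[K] A) (hT : IsOOperator3PreLie K p l r T) :
    Is3LDendriform K (fun a b c => l (T a) (T b) c) (fun a b c => r (T b) (T c) a) ∧
    ∀ u v w : V,
      T (hOp (fun a b c => l (T a) (T b) c) (fun a b c => r (T b) (T c) a) u v w)
        = p (T u) (T v) (T w) := by
  obtain ⟨hl, hr, ⟨hltri, hlskew, hlfund, hlfund2⟩, rep1, rep2, rep3, rep4⟩ := hrep
  set nw : V → V → V → V := fun a b c => l (T a) (T b) c with hnw
  set ne : V → V → V → V := fun a b c => r (T b) (T c) a with hne
  have hTh : ∀ u v w : V, T (hOp nw ne u v w) = p (T u) (T v) (T w) := by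
    intro u v w
    simp only [hOp, hnw, hne]
    rw [hT u v w]
    congr 1
    abel
  have hTc : ∀ u v w : V, T (cOp nw ne u v w) = preC p (T u) (T v) (T w) := by
    intro u v w
    simp only [cOp, map_add, hTh, preC]
  refine ⟨⟨⟨?_, ?_, ?_⟩, ⟨?_, ?_, ?_⟩, ?_, ?_, ?_, ?_, ?_, ?_, ?_⟩, hTh⟩
  · intro c x x' y z
    show l (T (c • x + x')) (T y) z = _
    rw [map_add, map_smul]
    exact hl.1 c (T x) (T x') (T y) z
  · intro c x y y' z
    show l (T x) (T (c • y + y')) z = _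
    rw [map_add, map_smul]
    exact hl.2.1 c (T x) (T y) (T y') z
  · intro c x y z z'
    exact hl.2.2 c (T x) (T y) z z'
  · intro c x x' y z
    exact hr.2.2 c (T y) (T z) x x'
  · intro c x y y' z
    show r (T (c • y + y')) (T z) x = _
    rw [map_add, map_smul]
    exact hr.1 c (T y) (T y') (T z) x
  · intro c x y z z'
    show r (T y) (T (c • z + z')) x = _
    rw [map_add, map_smul]
    exact hr.2.1 c (T y) (T z) (T z') x
  · intro x1 x2 x3
    show l (T x1) (T x2) x3 + l (T x2) (T x1) x3 = 0
    rw [hlskew (T x1) (T x2) x3]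
    abel
  · intro x1 x2 x3 x4 x5
    show l (T x1) (T x2) (l (T x3) (T x4) x5) - l (T x3) (T x4) (l (T x1) (T x2) x5)
      = l (T (cOp nw ne x1 x2 x3)) (T x4) x5 - l (T (cOp nw ne x1 x2 x4)) (T x3) x5
    rw [hTc, hTc]
    exact hlfund (T x1) (T x2) (T x3) (T x4) x5
  · intro x1 x2 x3 x4 x5
    show l (T x1) (T x2) (r (T x3) (T x4) x5) - r (T x3) (T (hOp nw ne x1 x2 x4)) x5
      = r (T (cOp nw ne x1 x2 x3)) (T x4) x5 + r (T x3) (T x4) (vOp nw ne x1 x2 x5)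
    rw [hTc, hTh]
    simp only [vOp, hnw, hne]
    rw [rep1 (T x1) (T x2) (T x3) (T x4) x5]
    abel
  · intro x1 x2 x3 x4 x5
    show r (T x1) (T (hOp nw ne x2 x3 x4)) x5 - l (T x2) (T x3) (r (T x1) (T x4) x5)
      = r (T x3) (T x4) (vOp nw ne x1 x2 x5) - r (T x2) (T x4) (vOp nw ne x1 x3 x5)
    rw [hTh]
    simp only [vOp, hnw, hne]
    rw [rep3 (T x1) (T x2) (T x3) (T x4) x5]
    abel
  · intro x1 x2 x3 x4 x5
    show l (T (cOp nw ne x1 x2 x3)) (T x4) x5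
      = l (T x1) (T x2) (l (T x3) (T x4) x5) + l (T x2) (T x3) (l (T x1) (T x4) x5)
        + l (T x3) (T x1) (l (T x2) (T x4) x5)
    rw [hTc]
    exact hlfund2 (T x1) (T x2) (T x3) (T x4) x5
  · intro x1 x2 x3 x4 x5
    show r (T (cOp nw ne x1 x2 x3)) (T x4) x5
      = l (T x1) (T x2) (r (T x3) (T x4) x5) + l (T x2) (T x3) (r (T x1) (T x4) x5)
        + l (T x3) (T x1) (r (T x2) (T x4) x5)
    rw [hTc]
    exact rep2 (T x1) (T x2) (T x3) (T x4) x5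
  · intro x1 x2 x3 x4 x5
    show l (T x1) (T x2) (r (T x3) (T x4) x5) + r (T x1) (T (hOp nw ne x2 x3 x4)) x5
      = r (T x2) (T (hOp nw ne x1 x3 x4)) x5 + r (T x3) (T x4) (vOp nw ne x1 x2 x5)
    rw [hTh, hTh]
    simp only [vOp, hnw, hne]
    rw [rep4 (T x1) (T x2) (T x3) (T x4) x5]
    abel
end

section
/- Let (A,[·,·,·]) be a 3-Lie algebra over a field K of characteristic 0 and let R1, R2 be Rota-Baxter operators of weight 0 on A with R1∘R2 = R2∘R1. Then R2 is a Rota-Baxter operator of weight 0 on the 3-pre-Lie algebra (A,{·,·,·}) defined by {x,y,z} = [R1(x),R1(y),z], i.e., {R2(x),R2(y),R2(z)} = R2({R2(x),R2(y),z} + {x,R2(y),R2(z)} + {R2(x),y,R2(z)}) for all x,y,z in A. -/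
universe u v w

variable (K : Type u) [Field K] [CharZero K]

/-- If `R1, R2` are commuting Rota-Baxter operators of weight 0 on a 3-Lie
algebra, then `R2` is a Rota-Baxter operator of weight 0 on the 3-pre-Lie algebra
`{x,y,z} = [R1(x),R1(y),z]`. -/
theorem stmt18 {A : Type v} [AddCommGroup A] [Module K A]
    (br : A → A → A → A) (hbr : Is3Lie K br)
    (R1 R2 : A →ₗ[K] A)
    (h1 : IsRotaBaxter3 K br R1) (h2 : IsRotaBaxter3 K br R2)
    (hcomm : ∀ x : A, R1 (R2 x) = R2 (R1 x)) :
    ∀ x y z : A,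
      br (R1 (R2 x)) (R1 (R2 y)) (R2 z)
        = R2 (br (R1 (R2 x)) (R1 (R2 y)) z + br (R1 x) (R1 (R2 y)) (R2 z)
            + br (R1 (R2 x)) (R1 y) (R2 z)) := by
  intro x y z
  rw [hcomm x, hcomm y, h2 (R1 x) (R1 y) z]
  congr 1
  abel
end
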